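/- With notation as in the triangular-point lemma, for each l ∈ {0,...,L} one has J^l M_f = Σ_{p path in Q of length ≥ l} Image(f_p), where for a path p = α_l···α_1 of positive length f_p := f_{α_l} ∘ ··· ∘ f_{α_1}, and for p = e_i of length 0, f_p is the projection onto ⊕_{0≤l≤L} K_{(l,i)}. -/
import Mathlib


open Matrix

section Framework

variable {K : Type*} [Field K] {n : ℕ}

/-- Paths in a quiver on vertices `Fin n` with `B i j` arrows from `i` to `j`. -/
inductive QPath (B : Fin n → Fin n → ℕ) : Fin n → Fin n → Type
  | nil (i : Fin n) : QPath B i i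
  | cons {i j k : Fin n} (p : QPath B i j) (a : Fin (B j k)) : QPath B i k

/-- Length of a path. -/
def QPath.length {B : Fin n → Fin n → ℕ} : ∀ {i j : Fin n}, QPath B i j → ℕ
  | _, _, .nil _ => 0
  | _, _, .cons p _ => p.length + 1

variable (K n) in
/-- A point of the representation space with dimension vector `d`. -/
abbrev RepPt (B : Fin n → Fin n → ℕ) (d : Fin n → ℕ) : Type _ :=
  ∀ i j : Fin n, Fin (B i j) → Matrix (Fin (d j)) (Fin (d i)) K

variable {B : Fin n → Fin n → ℕ} {d : Fin n → ℕ}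

/-- The matrix by which a path acts under a representation point. -/
def evalPath (x : RepPt K n B d) : ∀ {i j : Fin n}, QPath B i j → Matrix (Fin (d j)) (Fin (d i)) K
  | _, _, .nil _ => 1
  | _, _, .cons p a => x _ _ a * evalPath x p

/-- Membership in the representation variety of the truncated path algebra of Loewy length
`L+1`: all paths of length `L+1` act by zero. -/
def InRepTrunc (L : ℕ) (x : RepPt K n B d) : Prop :=
  ∀ (i j : Fin n) (p : QPath B i j), QPath.length p = L + 1 → evalPath x p = 0

/-- Evaluation of a formal `K`-linear combination of parallel paths. -/
noncomputable def evalRel (x : RepPt K n B d) {i j : Fin n} (r : QPath B i j →₀ K) :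
    Matrix (Fin (d j)) (Fin (d i)) K :=
  r.sum fun p c => c • evalPath x p

/-- Membership in the representation variety of `KQ/I`, for a family `I` of relations. -/
def InRep (I : ∀ i j : Fin n, Set (QPath B i j →₀ K)) (x : RepPt K n B d) : Prop :=
  ∀ i j : Fin n, ∀ r ∈ I i j, evalRel x r = 0

/-- The radical series of a subrepresentation `W` (for `W = ⊤`, of the module `M_x`):
`radSerIn x W (l+1)` is spanned by the images of `radSerIn x W l` under the arrows. -/
def radSerIn (x : RepPt K n B d) (W : ∀ i : Fin n, Submodule K (Fin (d i) → K)) :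
    ℕ → ∀ i : Fin n, Submodule K (Fin (d i) → K)
  | 0 => W
  | l + 1 => fun j =>
      ⨆ (i : Fin n) (a : Fin (B i j)),
        Submodule.map (Matrix.mulVecLin (x i j a)) (radSerIn x W l i)

/-- The module carried by the subrepresentation `W` of `M_x` has a filtration governed by the
semisimple sequence `S` (semisimple sequences are recorded by their dimension vectors). -/
def GovernedFiltOn (L : ℕ) (x : RepPt K n B d) (W : ∀ i : Fin n, Submodule K (Fin (d i) → K))
    (S : Fin (L + 1) → Fin n → ℕ) : Prop :=
  ∃ F : Fin (L + 2) → ∀ i : Fin n, Submodule K (Fin (d i) → K),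
    (∀ i, F 0 i = W i) ∧ (∀ i, F (Fin.last (L + 1)) i = ⊥) ∧
    (∀ (l : Fin (L + 1)) (i : Fin n), F l.succ i ≤ F l.castSucc i) ∧
    (∀ (l : Fin (L + 1)) (i j : Fin n) (a : Fin (B i j)),
      Submodule.map (Matrix.mulVecLin (x i j a)) (F l.castSucc i) ≤ F l.succ j) ∧
    (∀ (l : Fin (L + 1)) (i : Fin n),
      Module.finrank K ↥(F l.castSucc i) = Module.finrank K ↥(F l.succ i) + S l i)

/-- The module `M_x` has a filtration governed by `S`. -/
def GovernedFilt (L : ℕ) (x : RepPt K n B d) (S : Fin (L + 1) → Fin n → ℕ) : Prop :=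
  GovernedFiltOn L x (fun _ => ⊤) S

/-- The subrepresentation `W` of `M_x` has radical layering `S`. -/
def HasRadLayeringOn (L : ℕ) (x : RepPt K n B d) (W : ∀ i : Fin n, Submodule K (Fin (d i) → K))
    (S : Fin (L + 1) → Fin n → ℕ) : Prop :=
  (∀ i : Fin n, radSerIn x W (L + 1) i = ⊥) ∧
  ∀ (l : Fin (L + 1)) (i : Fin n),
    Module.finrank K ↥(radSerIn x W (l : ℕ) i) = ∑ j ∈ Finset.Ici l, S j i

/-- The module `M_x` has radical layering `S`. -/
def HasRadLayering (L : ℕ) (x : RepPt K n B d) (S : Fin (L + 1) → Fin n → ℕ) : Prop :=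
  HasRadLayeringOn L x (fun _ => ⊤) S

/-- The dominance order on semisimple sequences. -/
def DomLE {L : ℕ} (S T : Fin (L + 1) → Fin n → ℕ) : Prop :=
  ∀ (l : Fin (L + 1)) (i : Fin n), ∑ j ∈ Finset.Iic l, S j i ≤ ∑ j ∈ Finset.Iic l, T j i

variable (K) in
/-- Realizability of a semisimple sequence over the truncated path algebra. -/
def Realizable (L : ℕ) (B : Fin n → Fin n → ℕ) (S : Fin (L + 1) → Fin n → ℕ) : Prop :=
  ∃ x : RepPt K n B (fun i => ∑ l, S l i), InRepTrunc L x ∧ HasRadLayering L x S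

/-- Realizability of a semisimple sequence over `KQ/I`. -/
def RealizableRel (I : ∀ i j : Fin n, Set (QPath B i j →₀ K)) (L : ℕ)
    (S : Fin (L + 1) → Fin n → ℕ) : Prop :=
  ∃ x : RepPt K n B (fun i => ∑ l, S l i), InRep I x ∧ HasRadLayering L x S

/-- Coordinates of the affine space of representation points. -/
abbrev CoordIx (n : ℕ) (B : Fin n → Fin n → ℕ) (d : Fin n → ℕ) : Type :=
  Σ i : Fin n, Σ j : Fin n, Fin (B i j) × Fin (d j) × Fin (d i)

def coords (x : RepPt K n B d) : CoordIx n B d → K :=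
  fun c => x c.1 c.2.1 c.2.2.1 c.2.2.2.1 c.2.2.2.2

/-- Zariski-closed subsets of the affine space of representation points. -/
def ZClosed (Z : Set (RepPt K n B d)) : Prop :=
  ∃ P : Set (MvPolynomial (CoordIx n B d) K),
    Z = {x | ∀ f ∈ P, MvPolynomial.eval (coords x) f = 0}

/-- `T` is Zariski-closed in the subvariety `V`. -/
def ZClosedIn (V T : Set (RepPt K n B d)) : Prop :=
  ∃ Z : Set (RepPt K n B d), ZClosed Z ∧ T = V ∩ Z

/-- The Zariski closure of `C` inside `V`. -/
def ZClosureIn (V C : Set (RepPt K n B d)) : Set (RepPt K n B d) :=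
  {x | x ∈ V ∧ ∀ Z : Set (RepPt K n B d), ZClosed Z → C ⊆ Z → x ∈ Z}

/-- Irreducibility of a subset in the Zariski topology. -/
def ZIrred (C : Set (RepPt K n B d)) : Prop :=
  C.Nonempty ∧ ∀ Z₁ Z₂ : Set (RepPt K n B d), ZClosed Z₁ → ZClosed Z₂ →
    C ⊆ Z₁ ∪ Z₂ → C ⊆ Z₁ ∨ C ⊆ Z₂

/-- `C` is an irreducible component (a maximal irreducible subset) of `V`. -/
def IsIrredComponentOf (V C : Set (RepPt K n B d)) : Prop :=
  ZIrred C ∧ C ⊆ V ∧ ∀ C' : Set (RepPt K n B d), ZIrred C' → C' ⊆ V → C ⊆ C' → C' = C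

/-- The triangularity conditions (i) and (ii) on a representation point, relative to a
decomposition `C` of the spaces at the vertices. -/
def Triangular (L : ℕ) (x : RepPt K n B d)
    (C : Fin (L + 1) → ∀ i : Fin n, Submodule K (Fin (d i) → K)) : Prop :=
  ∀ (l : Fin (L + 1)) (i j : Fin n) (a : Fin (B i j)),
    Submodule.map (Matrix.mulVecLin (x i j a)) (C l i) ≤ ⨆ (m : Fin (L + 1)) (_ : l < m), C m j

/-- `C` is a decomposition of `K^d` induced by the semisimple sequence `S`. -/
def IsInducedDecomp (L : ℕ) (d : Fin n → ℕ) (S : Fin (L + 1) → Fin n → ℕ)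
    (C : Fin (L + 1) → ∀ i : Fin n, Submodule K (Fin (d i) → K)) : Prop :=
  (∀ i : Fin n, (⨆ l : Fin (L + 1), C l i) = ⊤) ∧
  (∀ (l : Fin (L + 1)) (i : Fin n), Module.finrank K ↥(C l i) = S l i) ∧
  (∀ i : Fin n, ∑ l : Fin (L + 1), S l i = d i)

end Framework

/-- With notation as in the triangular-point lemma (a representation point
`x` of `KQ/I` that is triangular with respect to a decomposition induced by `S`), for each
`l ∈ {0, …, L}` the radical power `J^l M_x` equals, at each vertex `i`, the sum of the images
of the maps `f_p` over the paths `p` of length `≥ l` ending at `i` (paths of length `0` acting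
as the projections onto the vertex components). -/
theorem radical_power_eq_path_images
    {K : Type*} [Field K] {n : ℕ} (L : ℕ) (B : Fin n → Fin n → ℕ) (d : Fin n → ℕ)
    (S : Fin (L + 1) → Fin n → ℕ)
    (I : ∀ i j : Fin n, Set (QPath B i j →₀ K))
    (hlong : ∀ (i j : Fin n) (p : QPath B i j), L + 1 ≤ QPath.length p →
      Finsupp.single p (1 : K) ∈ I i j)
    (x : RepPt K n B d) (hx : InRep I x)
    (C : Fin (L + 1) → ∀ i : Fin n, Submodule K (Fin (d i) → K))
    (hdec : IsInducedDecomp L d S C)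
    (htri : Triangular L x C) :
    ∀ l : ℕ, l ≤ L → ∀ i : Fin n,
      radSerIn x (fun _ => ⊤) l i =
        ⨆ (j : Fin n) (p : QPath B j i) (_ : l ≤ QPath.length p),
          LinearMap.range (Matrix.mulVecLin (evalPath x p)) := by
  intro l hl i
  clear hl
  induction l generalizing i with
  | zero =>
    refine le_antisymm (fun v _ => ?_) le_top
    refine Submodule.mem_iSup_of_mem i <| Submodule.mem_iSup_of_mem (.nil i) <|
      Submodule.mem_iSup_of_mem (Nat.zero_le _) ?_
    simp [evalPath]
  | succ l ih =>
    apply le_antisymm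
    · show (⨆ (k : Fin n) (a : Fin (B k i)),
        Submodule.map (Matrix.mulVecLin (x k i a)) (radSerIn x (fun _ => ⊤) l k)) ≤ _
      refine iSup_le fun k => iSup_le fun a => ?_
      rw [ih, Submodule.map_iSup]
      refine iSup_le fun j => ?_
      rw [Submodule.map_iSup]
      refine iSup_le fun p => ?_
      rw [Submodule.map_iSup]
      refine iSup_le fun hp => ?_
      refine le_iSup_of_le j <| le_iSup_of_le (QPath.cons p a) <|
        le_iSup_of_le (by simpa [QPath.length] using hp) ?_
      rw [evalPath, Matrix.mulVecLin_mul, LinearMap.range_comp]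
    · refine iSup_le fun j => iSup_le fun q => iSup_le fun hq => ?_
      cases q with
      | nil => simp [QPath.length] at hq
      | @cons j' mid p a =>
        show _ ≤ ⨆ (k : Fin n) (a : Fin (B k i)),
          Submodule.map (Matrix.mulVecLin (x k i a)) (radSerIn x (fun _ => ⊤) l k)
        refine le_iSup_of_le j' <| le_iSup_of_le a ?_
        rw [evalPath, Matrix.mulVecLin_mul, LinearMap.range_comp]
        refine Submodule.map_mono ?_
        rw [ih]
        exact le_iSup_of_le j <| le_iSup_of_le p <|
          le_iSup_of_le (by simpa [QPath.length] using hq) le_rfl
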